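/- Let E be a finite directed graph with no sinks in which no two distinct cycles share a common vertex. Define a relation on cycles by c ≥ c' if there is a path from a vertex of c to a vertex of c'. Then ≥ is a partial order on the set of cycles of E, and every cycle minimal with respect to ≥ has no exits. In particular, E contains at least one cycle without exits. -/

import Mathlib

/-- Reachability by a directed path (possibly of length `0`). -/
def Reach {V E : Type*} (s r : E → V) : V → V → Prop :=
  Relation.ReflTransGen fun a b => ∃ e : E, s e = a ∧ r e = b

/-- A cycle in the directed graph `(V, E, s, r)`: a closed path passing through no
vertex twice. -/
structure GCycle {V E : Type*} (s r : E → V) where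
  n : ℕ
  es : Fin (n + 1) → E
  chain : ∀ i : Fin n, r (es i.castSucc) = s (es i.succ)
  closed : r (es (Fin.last n)) = s (es 0)
  inj : Function.Injective fun i => s (es i)

/-- The set of vertices of a cycle. -/
def GCycle.verts {V E : Type*} {s r : E → V} (c : GCycle s r) : Set V :=
  Set.range fun i => s (c.es i)

/-- The set of edges of a cycle; two cycles are rotations of each other iff they have
the same edge set. -/
def GCycle.edges {V E : Type*} {s r : E → V} (c : GCycle s r) : Set E :=
  Set.range c.es

/-- `c ≥ c'` iff there is a path from a vertex of `c` to a vertex of `c'`. -/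
def CycGe {V E : Type*} {s r : E → V} (c c' : GCycle s r) : Prop :=
  ∃ u ∈ c.verts, ∃ w ∈ c'.verts, Reach s r u w

/-!
Following an edge out of every vertex defines a self-map of the finite vertex set; its periodic
orbits are cycles. Choosing the edges along shortest paths back to a vertex `x` turns every closed
walk through an edge `e` at `x` into such an orbit, so `e` lies on a cycle through `x`. When cycles
are vertex-disjoint this cycle is the one through `x`: hence an edge leaving a cycle never returns
to it, which gives antisymmetry and shows that minimal cycles have no exits. A vertex whose
reachable set is minimal reaches a minimal cycle.
-/

open Function Relation

section

variable {V E : Type*} {s r : E → V}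

def DisjointCycles (s r : E → V) : Prop :=
  ∀ c c' : GCycle s r, (c.verts ∩ c'.verts).Nonempty → c.edges = c'.edges

def ReachIn (s r : E → V) : ℕ → V → V → Prop
  | 0, a, b => a = b
  | n + 1, a, b => ∃ e, s e = a ∧ ReachIn s r n (r e) b

lemma exists_reachIn_of_reach {a b : V} (h : Reach s r a b) : ∃ n, ReachIn s r n a b := by
  induction h using ReflTransGen.head_induction_on with
  | refl => exact ⟨0, rfl⟩
  | head hstep _ ih =>
    obtain ⟨e, rfl, rfl⟩ := hstep
    obtain ⟨n, hn⟩ := ih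
    exact ⟨n + 1, e, rfl, hn⟩

lemma exists_iterate_mem_periodicPts {α : Type*} [Finite α] (f : α → α) (x : α) :
    ∃ k, f^[k] x ∈ periodicPts f := by
  obtain ⟨i, j, hij, heq⟩ := Finite.exists_ne_map_eq_of_infinite fun k => f^[k] x
  wlog hlt : i < j generalizing i j
  · exact this j i hij.symm heq.symm (by omega)
  refine ⟨i, mk_mem_periodicPts (n := j - i) (by omega) ?_⟩
  rw [IsPeriodicPt, IsFixedPt, ← iterate_add_apply, Nat.sub_add_cancel hlt.le]
  exact heq.symm

lemma exists_forall_reflTransGen_imp {α : Type*} [Finite α] [Nonempty α] (R : α → α → Prop) :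
    ∃ a, ∀ b, ReflTransGen R a b → ReflTransGen R b a := by
  obtain ⟨a, ha⟩ := Finite.exists_min fun a => {b | ReflTransGen R a b}.ncard
  refine ⟨a, fun b hab => ?_⟩
  have hsub : {c | ReflTransGen R b c} ⊆ {c | ReflTransGen R a c} := fun c hbc => hab.trans hbc
  show a ∈ {c | ReflTransGen R b c}
  rw [Set.eq_of_subset_of_ncard_le hsub (ha b)]
  exact ReflTransGen.refl

lemma reach_iterate {g : V → E} (hg : RightInverse g s) (v : V) (k : ℕ) :
    Reach s r v ((r ∘ g)^[k] v) := by
  induction k with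
  | zero => exact .refl
  | succ k ih => exact ih.tail ⟨g _, hg _, by rw [iterate_succ_apply', comp_apply]⟩

namespace GCycle

lemma s_mem_verts (c : GCycle s r) {e : E} (he : e ∈ c.edges) : s e ∈ c.verts := by
  obtain ⟨i, rfl⟩ := he
  exact ⟨i, rfl⟩

lemma r_mem_verts (c : GCycle s r) {e : E} (he : e ∈ c.edges) : r e ∈ c.verts := by
  obtain ⟨i, rfl⟩ := he
  induction i using Fin.lastCases with
  | last => exact ⟨0, c.closed.symm⟩
  | cast i => exact ⟨i.succ, (c.chain i).symm⟩

lemma verts_eq_image_edges (c : GCycle s r) : c.verts = s '' c.edges :=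
  Set.range_comp s c.es

lemma reach_zero_es (c : GCycle s r) (i : Fin (c.n + 1)) :
    Reach s r (s (c.es 0)) (s (c.es i)) := by
  induction i using Fin.induction with
  | zero => exact .refl
  | succ i ih => exact ih.tail ⟨c.es i.castSucc, rfl, c.chain i⟩

lemma reach_es_zero (c : GCycle s r) (i : Fin (c.n + 1)) :
    Reach s r (s (c.es i)) (s (c.es 0)) := by
  induction i using Fin.reverseInduction with
  | last => exact .single ⟨_, rfl, c.closed⟩
  | cast i ih => exact .head ⟨c.es i.castSucc, rfl, c.chain i⟩ ih

lemma reach_of_mem_verts (c : GCycle s r) {u w : V} (hu : u ∈ c.verts) (hw : w ∈ c.verts) :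
    Reach s r u w := by
  obtain ⟨i, rfl⟩ := hu
  obtain ⟨j, rfl⟩ := hw
  exact (c.reach_es_zero i).trans (c.reach_zero_es j)

noncomputable def ofPeriodicPt (g : V → E) (hg : RightInverse g s) (x : V)
    (hx : x ∈ periodicPts (r ∘ g)) : GCycle s r where
  n := minimalPeriod (r ∘ g) x - 1
  es i := g ((r ∘ g)^[i] x)
  chain i := by
    rw [hg, Fin.val_succ, iterate_succ_apply', Fin.val_castSucc, comp_apply]
  closed := by
    have hper : (r ∘ g)^[minimalPeriod (r ∘ g) x - 1 + 1] x = x := by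
      rw [Nat.sub_one_add_one (minimalPeriod_pos_of_mem_periodicPts hx).ne']
      exact iterate_minimalPeriod
    rw [iterate_succ_apply'] at hper
    rw [hg, Fin.val_zero, iterate_zero_apply, Fin.val_last]
    exact hper
  inj i j hij := by
    have hlt : ∀ i : Fin (minimalPeriod (r ∘ g) x - 1 + 1), (i : ℕ) < minimalPeriod (r ∘ g) x :=
      fun i => by have := minimalPeriod_pos_of_mem_periodicPts hx; omega
    dsimp only at hij
    rw [hg, hg] at hij
    exact Fin.ext (iterate_injOn_Iio_minimalPeriod (hlt i) (hlt j) hij)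

lemma mem_edges_ofPeriodicPt (g : V → E) (hg : RightInverse g s) (x : V)
    (hx : x ∈ periodicPts (r ∘ g)) : g x ∈ (ofPeriodicPt g hg x hx).edges :=
  ⟨0, rfl⟩

end GCycle

lemma exists_cycle_reach [Finite V] (hs : Surjective s) (v : V) :
    ∃ c : GCycle s r, ∃ w ∈ c.verts, Reach s r v w := by
  set g := surjInv hs
  have hg : RightInverse g s := rightInverse_surjInv hs
  obtain ⟨k, hk⟩ := exists_iterate_mem_periodicPts (r ∘ g) v
  let c := GCycle.ofPeriodicPt g hg _ hk
  refine ⟨c, _, ?_, reach_iterate hg v k⟩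
  simpa only [hg _] using c.s_mem_verts (GCycle.mem_edges_ofPeriodicPt g hg _ hk)

lemma exists_edge_reachIn_lt {v x : V} (hvx : v ≠ x) (h : ∃ n, ReachIn s r n v x) :
    ∃ e, s e = v ∧ ∀ n, ReachIn s r n v x → ∃ m < n, ReachIn s r m (r e) x := by
  classical
  obtain ⟨m, hm⟩ : ∃ m, Nat.find h = m + 1 :=
    Nat.exists_eq_succ_of_ne_zero fun h0 => hvx <| by
      simpa only [h0, ReachIn] using Nat.find_spec h
  obtain ⟨e, he, hpath⟩ : ReachIn s r (m + 1) v x := hm ▸ Nat.find_spec h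
  exact ⟨e, he, fun n hn => ⟨m, by have := Nat.find_min' h hn; omega, hpath⟩⟩

/-- Choose `e` at `s e`, and elsewhere the first edge of a shortest path to `s e`. -/
lemma exists_rightInverse_iterate_eq (hs : Surjective s) (e : E) :
    ∃ g : V → E, RightInverse g s ∧ g (s e) = e ∧
      ∀ v, Reach s r v (s e) → ∃ k, (r ∘ g)^[k] v = s e := by
  have hchoice : ∀ v, ∃ e', s e' = v ∧ (v = s e → e' = e) ∧
      (v ≠ s e → ∀ n, ReachIn s r n v (s e) → ∃ m < n, ReachIn s r m (r e') (s e)) := by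
    intro v
    by_cases hv : v = s e
    · exact ⟨e, hv.symm, fun _ => rfl, fun h => (h hv).elim⟩
    by_cases h : ∃ n, ReachIn s r n v (s e)
    · obtain ⟨e', he', hlt⟩ := exists_edge_reachIn_lt hv h
      exact ⟨e', he', fun h => (hv h).elim, fun _ => hlt⟩
    · obtain ⟨e', he'⟩ := hs v
      exact ⟨e', he', fun h => (hv h).elim, fun _ n hn => (h ⟨n, hn⟩).elim⟩
  choose g hgs hge hglt using hchoice
  suffices hdrain : ∀ n v, ReachIn s r n v (s e) → ∃ k, (r ∘ g)^[k] v = s e from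
    ⟨g, hgs, hge _ rfl, fun v hv => (exists_reachIn_of_reach hv).elim (hdrain · v)⟩
  intro n
  induction n using Nat.strong_induction_on with
  | _ n ih =>
    intro v hn
    by_cases hv : v = s e
    · exact ⟨0, hv⟩
    obtain ⟨m, hmn, hm⟩ := hglt v hv n hn
    obtain ⟨k, hk⟩ := ih m hmn _ hm
    exact ⟨k + 1, hk⟩

lemma exists_cycle_mem_edges_of_reach (hs : Surjective s) {e : E} (h : Reach s r (r e) (s e)) :
    ∃ c : GCycle s r, e ∈ c.edges := by
  obtain ⟨g, hg, hge, hdrain⟩ := exists_rightInverse_iterate_eq (r := r) hs e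
  obtain ⟨k, hk⟩ := hdrain _ h
  have hper : s e ∈ periodicPts (r ∘ g) := by
    refine mk_mem_periodicPts k.succ_pos ?_
    rw [IsPeriodicPt, IsFixedPt, iterate_succ_apply, comp_apply, hge, hk]
  have he := GCycle.mem_edges_ofPeriodicPt g hg _ hper
  rw [hge] at he
  exact ⟨_, he⟩

namespace GCycle

lemma mem_edges_of_reach (hs : Surjective s) (hdisj : DisjointCycles s r) (c : GCycle s r)
    {e : E} (hc : s e ∈ c.verts) (h : Reach s r (r e) (s e)) : e ∈ c.edges := by
  obtain ⟨c', he⟩ := exists_cycle_mem_edges_of_reach hs h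
  rw [hdisj c c' ⟨s e, hc, c'.s_mem_verts he⟩]
  exact he

lemma mem_verts_of_reach_of_reach (hs : Surjective s) (hdisj : DisjointCycles s r)
    (c : GCycle s r) {u w : V} (hu : u ∈ c.verts) (huw : Reach s r u w) (hwu : Reach s r w u) :
    w ∈ c.verts := by
  induction huw with
  | refl => exact hu
  | @tail b w huw hbw ih =>
    obtain ⟨e, rfl, rfl⟩ := hbw
    have hb := ih (.head ⟨e, rfl, rfl⟩ hwu)
    exact c.r_mem_verts <|
      c.mem_edges_of_reach hs hdisj hb (hwu.trans (c.reach_of_mem_verts hu hb))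

end GCycle

lemma CycGe.refl (c : GCycle s r) : CycGe c c :=
  ⟨_, ⟨0, rfl⟩, _, ⟨0, rfl⟩, .refl⟩

lemma CycGe.trans {c₁ c₂ c₃ : GCycle s r} : CycGe c₁ c₂ → CycGe c₂ c₃ → CycGe c₁ c₃ := by
  rintro ⟨u, hu, w, hw, h₁⟩ ⟨u', hu', w', hw', h₂⟩
  exact ⟨u, hu, w', hw', h₁.trans ((c₂.reach_of_mem_verts hw hu').trans h₂)⟩

lemma CycGe.antisymm (hs : Surjective s) (hdisj : DisjointCycles s r) {c c' : GCycle s r} :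
    CycGe c c' → CycGe c' c → c.edges = c'.edges := by
  rintro ⟨u, hu, w, hw, h₁⟩ ⟨u', hu', w', hw', h₂⟩
  have hwu : Reach s r w u :=
    (c'.reach_of_mem_verts hw hu').trans (h₂.trans (c.reach_of_mem_verts hw' hu))
  exact hdisj c c' ⟨w, c.mem_verts_of_reach_of_reach hs hdisj hu h₁ hwu, hw⟩

lemma GCycle.mem_edges_of_minimal [Finite V] (hs : Surjective s) (hdisj : DisjointCycles s r)
    {c : GCycle s r} (hmin : ∀ c' : GCycle s r, CycGe c c' → c'.edges = c.edges) {f : E}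
    (hf : s f ∈ c.verts) : f ∈ c.edges := by
  obtain ⟨c', w, hw, hfw⟩ := exists_cycle_reach (r := r) hs (r f)
  have hc' : c'.verts = c.verts := by
    rw [c'.verts_eq_image_edges, c.verts_eq_image_edges,
      hmin c' ⟨s f, hf, w, hw, .head ⟨f, rfl, rfl⟩ hfw⟩]
  exact c.mem_edges_of_reach hs hdisj hf (hfw.trans (c.reach_of_mem_verts (hc' ▸ hw) hf))

lemma exists_minimal_cycle [Finite V] [Nonempty V] (hs : Surjective s)
    (hdisj : DisjointCycles s r) :
    ∃ c : GCycle s r, ∀ c' : GCycle s r, CycGe c c' → c'.edges = c.edges := by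
  obtain ⟨v, hv⟩ := exists_forall_reflTransGen_imp fun a b => ∃ e : E, s e = a ∧ r e = b
  obtain ⟨c, w, hw, hvw⟩ := exists_cycle_reach (r := r) hs v
  refine ⟨c, fun c' hcc' => (CycGe.antisymm hs hdisj hcc' ?_).symm⟩
  obtain ⟨u, hu, w', hw', huw'⟩ := hcc'
  have hw'v := hv w' (hvw.trans ((c.reach_of_mem_verts hw hu).trans huw'))
  exact ⟨w', hw', w, hw, hw'v.trans hvw⟩

end

theorem cycle_order_and_no_exit_cycle {V E : Type*} [Fintype V]
    [Nonempty V] (s r : E → V)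
    (hnosink : ∀ u : V, ∃ e : E, s e = u)
    (hdisj : ∀ c c' : GCycle s r, (c.verts ∩ c'.verts).Nonempty → c.edges = c'.edges) :
    (∀ c : GCycle s r, CycGe c c) ∧
    (∀ c₁ c₂ c₃ : GCycle s r, CycGe c₁ c₂ → CycGe c₂ c₃ → CycGe c₁ c₃) ∧
    (∀ c c' : GCycle s r, CycGe c c' → CycGe c' c → c.edges = c'.edges) ∧
    (∀ c : GCycle s r, (∀ c' : GCycle s r, CycGe c c' → c'.edges = c.edges) →
      ∀ f : E, s f ∈ c.verts → f ∈ c.edges) ∧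
    (∃ c : GCycle s r, ∀ f : E, s f ∈ c.verts → f ∈ c.edges) := by
  obtain ⟨c₀, hc₀⟩ := exists_minimal_cycle hnosink hdisj
  exact ⟨CycGe.refl, fun _ _ _ => CycGe.trans, fun _ _ => CycGe.antisymm hnosink hdisj,
    fun _ hmin _ => GCycle.mem_edges_of_minimal hnosink hdisj hmin,
    c₀, fun _ => GCycle.mem_edges_of_minimal hnosink hdisj hc₀⟩
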